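/- Let K be a planar polygonal element (triangle or planar quadrilateral) cut out of a shape regular tetrahedron T of diameter ≈ h by a hyperplane (K = T ∩ Σ_h), and let v be an affine function on T. Then h²‖∇_{Σ_h} v‖²_{L²(K)} ≲ h‖∇v‖²_{L²(T)} ≲ h⁻¹‖v‖²_{L²(T)}, where ∇_{Σ_h}v is the component of ∇v tangential to the plane of K; in particular h²‖∇_{Σ_h} v‖²_{L²(K)} ≲ h⁻¹‖v‖²_{L²(T)}, with constants depending only on shape regularity and independent of the position of the cutting plane. -/

import Mathlib

/-!
All three quantities are compared with `h⁴ ‖g‖²`. The cut lies in a plane and has diameter at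
most `h`; pulled back along an isometric parametrisation of the plane it sits in a disc of
radius `h`, so its area is `≲ h²`. The tetrahedron lies in a ball of radius `h` and contains one
of radius `h / γ`, so its volume is `≈ h³`. An affine function `v` with gradient `g` satisfies
`|v| ≥ r ‖g‖ / 4` on a ball of radius `r / 4` inside any ball of radius `r` (shifted from the
centre along `± g`, according to the sign of `v` there), whence `∫_T v² ≳ h⁵ ‖g‖²`. The third
inequality is the composite of the first two.
-/

open MeasureTheory Metric Set Module
open scoped RealInnerProductSpace

noncomputable section

abbrev E3 := EuclideanSpace ℝ (Fin 3)

def tensorSq (a : E3) : E3 →L[ℝ] E3 := ((innerSL ℝ) a).smulRight a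

def tangentProj (n : E3) : E3 →L[ℝ] E3 := ContinuousLinearMap.id ℝ E3 - tensorSq n

section Measure

variable {E : Type*} [NormedAddCommGroup E] [NormedSpace ℝ E] [FiniteDimensional ℝ E]
  [MeasurableSpace E] [BorelSpace E] (μ : Measure E) [μ.IsAddHaarMeasure]

theorem addHaar_real_ball_of_pos (x : E) {r : ℝ} (hr : 0 < r) :
    μ.real (ball x r) = r ^ finrank ℝ E * μ.real (ball 0 1) := by
  rw [measureReal_def, Measure.addHaar_ball_of_pos μ x hr, ENNReal.toReal_mul,
    ENNReal.toReal_ofReal (by positivity), measureReal_def]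

theorem addHaar_real_le_of_subset_closedBall {T : Set E} {x : E} {r : ℝ} (hr : 0 ≤ r)
    (hT : T ⊆ closedBall x r) : μ.real T ≤ r ^ finrank ℝ E * μ.real (ball 0 1) := by
  rw [← Measure.addHaar_real_closedBall μ x hr]
  exact measureReal_mono hT measure_closedBall_lt_top.ne

end Measure

section InnerProduct

variable {E : Type*} [NormedAddCommGroup E] [InnerProductSpace ℝ E]

theorem hausdorffMeasure_le_of_subset_hyperplane [MeasurableSpace E] [BorelSpace E] {n : ℕ}
    [Fact (finrank ℝ E = n + 1)] {m : E} (hm : m ≠ 0) {c r : ℝ} (hr : 0 ≤ r) {s : Set E}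
    (hs : s ⊆ {x | ⟪m, x⟫ = c}) (hdiam : ∀ x ∈ s, ∀ y ∈ s, dist x y ≤ r) :
    μH[n] s ≤ ENNReal.ofReal (r ^ n) * μH[n] (closedBall (0 : EuclideanSpace ℝ (Fin n)) 1) := by
  rcases s.eq_empty_or_nonempty with rfl | ⟨x₀, hx₀⟩
  · simp
  let e := (OrthonormalBasis.fromOrthogonalSpanSingleton (𝕜 := ℝ) n hm).repr
  let ψ : EuclideanSpace ℝ (Fin n) → E := fun y => x₀ + (e.symm y : E)
  have hψ : Isometry ψ :=
    (IsometryEquiv.addLeft x₀).isometry.comp ((ℝ ∙ m)ᗮ.subtypeₗᵢ.isometry.comp e.symm.isometry)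
  have hrange : s ⊆ range ψ := by
    intro x hx
    have hmem : x - x₀ ∈ (ℝ ∙ m)ᗮ := by
      rw [Submodule.mem_orthogonal_singleton_iff_inner_right, inner_sub_right, hs hx, hs hx₀,
        sub_self]
    exact ⟨e ⟨x - x₀, hmem⟩, by simp [ψ]⟩
  have hball : ψ ⁻¹' s ⊆ closedBall 0 r := by
    intro y hy
    have hψ0 : ψ 0 = x₀ := by simp [ψ]
    rw [mem_closedBall, ← hψ.dist_eq, hψ0]
    exact hdiam _ hy _ hx₀
  calc μH[n] s = μH[n] (ψ ⁻¹' s) := by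
        rw [hψ.hausdorffMeasure_preimage (Or.inl n.cast_nonneg), inter_eq_left.mpr hrange]
    _ ≤ μH[n] (closedBall 0 r) := measure_mono hball
    _ = _ := by rw [Measure.addHaar_closedBall' _ _ hr, finrank_euclideanSpace_fin]

theorem exists_closedBall_subset_abs_affine_ge (g z : E) (c₀ : ℝ) {r : ℝ} (hr : 0 < r) :
    ∃ x₁, closedBall x₁ (r / 4) ⊆ ball z r ∧
      ∀ x ∈ closedBall x₁ (r / 4), r * ‖g‖ / 4 ≤ |⟪g, x⟫ + c₀| := by
  wlog ha : 0 ≤ ⟪g, z⟫ + c₀ generalizing g c₀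
  · obtain ⟨x₁, hsub, hge⟩ := this (-g) (-c₀) (by rw [inner_neg_left]; linarith)
    refine ⟨x₁, hsub, fun x hx => ?_⟩
    have := hge x hx
    rwa [norm_neg, inner_neg_left, ← neg_add, abs_neg] at this
  set x₁ := z + (r / 2) • ‖g‖⁻¹ • g
  have hu : ‖‖g‖⁻¹ • g‖ ≤ 1 := by
    rw [norm_smul, norm_inv, norm_norm]
    exact inv_mul_le_one_of_le₀ le_rfl (norm_nonneg g)
  have hgu : ⟪g, ‖g‖⁻¹ • g⟫ = ‖g‖ := by
    rw [real_inner_smul_right, real_inner_self_eq_norm_sq]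
    rcases eq_or_ne ‖g‖ 0 with h0 | h0
    · simp [h0]
    · field_simp
  refine ⟨x₁, closedBall_subset_ball' ?_, fun x hx => ?_⟩
  · rw [dist_eq_norm, add_sub_cancel_left, norm_smul, Real.norm_of_nonneg (by positivity)]
    nlinarith
  have hdev : |⟪g, x - x₁⟫| ≤ ‖g‖ * (r / 4) :=
    (abs_real_inner_le_norm _ _).trans
      (mul_le_mul_of_nonneg_left (by rwa [← dist_eq_norm, ← mem_closedBall]) (norm_nonneg g))
  have hsplit : ⟪g, x⟫ + c₀ = (⟪g, z⟫ + c₀) + r / 2 * ‖g‖ + ⟪g, x - x₁⟫ := by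
    rw [inner_sub_right, inner_add_right, real_inner_smul_right, hgu]
    ring
  rw [hsplit]
  refine le_trans ?_ (le_abs_self _)
  nlinarith [neg_abs_le ⟪g, x - x₁⟫]

variable [FiniteDimensional ℝ E] [MeasurableSpace E] [BorelSpace E] (μ : Measure E)
  [μ.IsAddHaarMeasure]

theorem integral_sq_affine_ge_of_ball_subset {T : Set E} {z : E} {r : ℝ} (hr : 0 < r)
    (hball : ball z r ⊆ T) (g : E) (c₀ : ℝ)
    (hint : IntegrableOn (fun x => (⟪g, x⟫ + c₀) ^ 2) T μ) :
    (r * ‖g‖ / 4) ^ 2 * ((r / 4) ^ finrank ℝ E * μ.real (ball 0 1)) ≤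
      ∫ x in T, (⟪g, x⟫ + c₀) ^ 2 ∂μ := by
  obtain ⟨x₁, hsub, hge⟩ := exists_closedBall_subset_abs_affine_ge g z c₀ hr
  have hsubT := hsub.trans hball
  calc (r * ‖g‖ / 4) ^ 2 * ((r / 4) ^ finrank ℝ E * μ.real (ball 0 1))
      = ∫ _ in closedBall x₁ (r / 4), (r * ‖g‖ / 4) ^ 2 ∂μ := by
        rw [setIntegral_const, smul_eq_mul, Measure.addHaar_real_closedBall μ x₁ (by positivity),
          mul_comm]
    _ ≤ ∫ x in closedBall x₁ (r / 4), (⟪g, x⟫ + c₀) ^ 2 ∂μ :=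
        setIntegral_mono_on (integrableOn_const measure_closedBall_lt_top.ne)
          (hint.mono_set hsubT) measurableSet_closedBall fun x hx => by
            rw [← sq_abs (⟪g, x⟫ + c₀)]
            exact pow_le_pow_left₀ (by positivity) (hge x hx) 2
    _ ≤ ∫ x in T, (⟪g, x⟫ + c₀) ^ 2 ∂μ :=
        setIntegral_mono_set hint (.of_forall fun _ => sq_nonneg _) hsubT.eventuallyLE

theorem mul_integral_norm_sq_le_inv_mul_integral_affine_sq {T : Set E} (hT : IsCompact T)
    {z : E} {h γ : ℝ} (hh : 0 < h) (hγ : 0 < γ) (hdiam : diam T ≤ h) (hball : ball z (h / γ) ⊆ T)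
    (g : E) (c₀ : ℝ) :
    h * ∫ _ in T, ‖g‖ ^ 2 ∂μ ≤
      (4 * γ) ^ (finrank ℝ E + 2) * (h⁻¹ * ∫ x in T, (⟪g, x⟫ + c₀) ^ 2 ∂μ) := by
  set n := finrank ℝ E
  set V := μ.real (ball (0 : E) 1)
  have hz : z ∈ T := hball (mem_ball_self (by positivity))
  have hvol : μ.real T ≤ h ^ n * V := addHaar_real_le_of_subset_closedBall μ hh.le
    fun x hx => mem_closedBall.2 ((dist_le_diam_of_mem hT.isBounded hx hz).trans hdiam)
  have hint : IntegrableOn (fun x => (⟪g, x⟫ + c₀) ^ 2) T μ :=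
    (by fun_prop : Continuous fun x => (⟪g, x⟫ + c₀) ^ 2).continuousOn.integrableOn_compact hT
  have haff := integral_sq_affine_ge_of_ball_subset μ (by positivity) hball g c₀ hint
  calc h * ∫ _ in T, ‖g‖ ^ 2 ∂μ = h * (μ.real T * ‖g‖ ^ 2) := by
        rw [setIntegral_const, smul_eq_mul]
    _ ≤ h * (h ^ n * V * ‖g‖ ^ 2) := by gcongr
    _ = (4 * γ) ^ (n + 2) * (h⁻¹ * ((h / γ * ‖g‖ / 4) ^ 2 * ((h / γ / 4) ^ n * V))) := by
        simp only [div_pow, mul_pow]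
        field_simp
        ring
    _ ≤ _ := by gcongr

theorem sq_mul_integral_slice_le {n : ℕ} [Fact (finrank ℝ E = n + 1)] {T : Set E}
    (hT : IsCompact T) {z : E} {h γ : ℝ} (hh : 0 < h) (hγ : 0 < γ) (hdiam : diam T ≤ h)
    (hball : ball z (h / γ) ⊆ T) {m : E} (hm : m ≠ 0) (c : ℝ) (g : E) :
    h ^ 2 * ∫ _ in T ∩ {x | ⟪m, x⟫ = c}, ‖(ℝ ∙ m)ᗮ.starProjection g‖ ^ 2 ∂μH[n] ≤
      μH[n].real (closedBall (0 : EuclideanSpace ℝ (Fin n)) 1) * γ ^ (n + 1) / μ.real (ball 0 1) *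
        (h * ∫ _ in T, ‖g‖ ^ 2 ∂μ) := by
  set A := μH[n].real (closedBall (0 : EuclideanSpace ℝ (Fin n)) 1)
  set V := μ.real (ball (0 : E) 1)
  set K := T ∩ {x | ⟪m, x⟫ = c}
  have hV : 0 < V := ENNReal.toReal_pos (measure_ball_pos μ 0 one_pos).ne' measure_ball_lt_top.ne
  have hslice : μH[n].real K ≤ h ^ n * A := by
    have hle := hausdorffMeasure_le_of_subset_hyperplane (n := n) hm hh.le (s := K)
      inter_subset_right fun x hx y hy => (dist_le_diam_of_mem hT.isBounded hx.1 hy.1).trans hdiam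
    refine (ENNReal.toReal_mono (ENNReal.mul_ne_top ENNReal.ofReal_ne_top
      (isCompact_closedBall _ _).measure_lt_top.ne) hle).trans_eq ?_
    rw [ENNReal.toReal_mul, ENNReal.toReal_ofReal (by positivity)]
    rfl
  have hvol : (h / γ) ^ (n + 1) * V ≤ μ.real T := by
    rw [← ‹Fact (finrank ℝ E = n + 1)›.out, ← addHaar_real_ball_of_pos μ z (by positivity)]
    exact measureReal_mono hball hT.measure_lt_top.ne
  have hproj := Submodule.norm_starProjection_apply_le (ℝ ∙ m)ᗮ g
  calc h ^ 2 * ∫ _ in K, ‖(ℝ ∙ m)ᗮ.starProjection g‖ ^ 2 ∂μH[n]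
      = h ^ 2 * (μH[n].real K * ‖(ℝ ∙ m)ᗮ.starProjection g‖ ^ 2) := by
        rw [setIntegral_const, smul_eq_mul]
    _ ≤ h ^ 2 * (h ^ n * A * ‖g‖ ^ 2) := by gcongr
    _ = A * γ ^ (n + 1) / V * (h * ((h / γ) ^ (n + 1) * V * ‖g‖ ^ 2)) := by
        rw [div_pow]
        field_simp
        ring
    _ ≤ A * γ ^ (n + 1) / V * (h * (μ.real T * ‖g‖ ^ 2)) := by gcongr
    _ = _ := by rw [setIntegral_const, smul_eq_mul]

end InnerProduct

lemma tangentProj_eq_starProjection {m : E3} (hm : ‖m‖ = 1) :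
    tangentProj m = (ℝ ∙ m)ᗮ.starProjection := by
  ext1 g
  simp [tangentProj, tensorSq, Submodule.starProjection_orthogonal,
    Submodule.starProjection_unit_singleton ℝ hm]

theorem le_mul_chain {X Y Z C₁ C₂ : ℝ} (hC₁ : 0 ≤ C₁) (hC₂ : 0 ≤ C₂) (hY : 0 ≤ Y) (hZ : 0 ≤ Z)
    (hXY : X ≤ C₁ * Y) (hYZ : Y ≤ C₂ * Z) :
    X ≤ (C₁ + C₂ + C₁ * C₂) * Y ∧ Y ≤ (C₁ + C₂ + C₁ * C₂) * Z ∧ X ≤ (C₁ + C₂ + C₁ * C₂) * Z := by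
  have hC₁Y : C₁ * Y ≤ C₁ * (C₂ * Z) := mul_le_mul_of_nonneg_left hYZ hC₁
  refine ⟨?_, ?_, ?_⟩ <;> nlinarith [mul_nonneg hC₁ hC₂, mul_nonneg hC₁ hY, mul_nonneg hC₂ hY,
    mul_nonneg hC₁ hZ, mul_nonneg hC₂ hZ, mul_nonneg (mul_nonneg hC₁ hC₂) hY]

/-- Let `K = T ∩ {x : ⟪m, x⟫ = c}` be the planar element cut out
of a shape regular tetrahedron `T = conv{v₀,v₁,v₂,v₃}` of diameter `≲ h`
(containing a ball of radius `h/γ`) by a hyperplane with unit normal `m`, and let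
`v(x) = ⟪g, x⟫ + c₀` be affine on `T` (so `∇v = g` and `∇_{Σ_h}v = P_K g` with
`P_K = I − m⊗m`).  Then
`h²‖∇_{Σ_h}v‖²_{L²(K)} ≲ h‖∇v‖²_{L²(T)} ≲ h⁻¹‖v‖²_{L²(T)}`, in particular
`h²‖∇_{Σ_h}v‖²_{L²(K)} ≲ h⁻¹‖v‖²_{L²(T)}`, with constants depending only on the
shape regularity `γ` and independent of the cutting plane. -/
theorem cut_element_inverse_inequality :
    ∀ γ : ℝ, 0 < γ → ∃ C : ℝ, 0 < C ∧
      ∀ (h : ℝ), 0 < h →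
      ∀ v₀ v₁ v₂ v₃ : E3,
        Metric.diam (convexHull ℝ {v₀, v₁, v₂, v₃}) ≤ h →
        (∃ z : E3, Metric.ball z (h / γ) ⊆ convexHull ℝ {v₀, v₁, v₂, v₃}) →
      ∀ (m : E3) (c : ℝ), ‖m‖ = 1 →
      ∀ (g : E3) (c₀ : ℝ),
        (h ^ 2 * ∫ x in convexHull ℝ {v₀, v₁, v₂, v₃} ∩ {x : E3 | ⟪m, x⟫ = c},
            ‖tangentProj m g‖ ^ 2 ∂(Measure.hausdorffMeasure 2)) ≤
          C * (h * ∫ x in convexHull ℝ {v₀, v₁, v₂, v₃}, ‖g‖ ^ 2) ∧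
        (h * ∫ x in convexHull ℝ {v₀, v₁, v₂, v₃}, ‖g‖ ^ 2) ≤
          C * (h⁻¹ * ∫ x in convexHull ℝ {v₀, v₁, v₂, v₃}, (⟪g, x⟫ + c₀) ^ 2) ∧
        (h ^ 2 * ∫ x in convexHull ℝ {v₀, v₁, v₂, v₃} ∩ {x : E3 | ⟪m, x⟫ = c},
            ‖tangentProj m g‖ ^ 2 ∂(Measure.hausdorffMeasure 2)) ≤
          C * (h⁻¹ * ∫ x in convexHull ℝ {v₀, v₁, v₂, v₃}, (⟪g, x⟫ + c₀) ^ 2) := by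
  intro γ hγ
  have : Fact (finrank ℝ E3 = 2 + 1) := ⟨finrank_euclideanSpace_fin⟩
  set C₁ := μH[2].real (closedBall (0 : EuclideanSpace ℝ (Fin 2)) 1) * γ ^ (2 + 1) /
    volume.real (ball (0 : E3) 1)
  set C₂ := (4 * γ) ^ (finrank ℝ E3 + 2)
  refine ⟨C₁ + C₂ + C₁ * C₂, by positivity, ?_⟩
  rintro h hh v₀ v₁ v₂ v₃ hdiam ⟨z, hz⟩ m c hm g c₀
  have hT : IsCompact (convexHull ℝ {v₀, v₁, v₂, v₃}) := 
    (toFinite _).isCompact_convexHull (𝕜 := ℝ)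
  have hm0 : m ≠ 0 := by rintro rfl; simp at hm
  have hcut := sq_mul_integral_slice_le (n := 2) volume hT hh hγ hdiam hz hm0 c g
  rw [← tangentProj_eq_starProjection hm, Nat.cast_ofNat] at hcut
  exact le_mul_chain (by positivity) (by positivity)
    (mul_nonneg hh.le (setIntegral_nonneg hT.measurableSet fun _ _ => sq_nonneg _))
    (mul_nonneg (inv_nonneg.2 hh.le) (setIntegral_nonneg hT.measurableSet fun _ _ => sq_nonneg _))
    hcut (mul_integral_norm_sq_le_inv_mul_integral_affine_sq volume hT hh hγ hdiam hz g c₀)
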